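/- arXiv:2211.10706 — 3 statements merged into one kernel-verified Lean document; each statement's English description precedes it below -/
import Mathlib

section
/- Under the hypotheses of the previous statement, if α = 1 then both Ũ_r and Ũ_z extend to C^∞ functions on [0, ∞) × ℝ. -/
open Real MeasureTheory Set Filter Topology

set_option maxHeartbeats 1000000

namespace TCaux

noncomputable def kdiv (g : ℝ × ℝ → ℝ) : ℝ × ℝ → ℝ :=
  fun p => ∫ t in (0:ℝ)..1, (fderiv ℝ g (t * p.1, p.2)) ((1:ℝ), (0:ℝ))

variable {g : ℝ × ℝ → ℝ}

lemma fderiv_cont (hg : ContDiff ℝ (⊤ : ℕ∞) g) : Continuous (fderiv ℝ g) :=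
  (hg.fderiv_right (m := 0) (by simp)).continuous

lemma integrand_cont (hg : ContDiff ℝ (⊤ : ℕ∞) g) (x z : ℝ) :
    Continuous fun t : ℝ => (fderiv ℝ g (t * x, z)) ((1:ℝ), (0:ℝ)) := by
  have hc : Continuous fun t : ℝ => (t * x, z) := by fun_prop
  exact (ContinuousLinearMap.apply ℝ ℝ ((1:ℝ),(0:ℝ))).continuous.comp
    ((fderiv_cont hg).comp hc)

lemma kdiv_spec (hg : ContDiff ℝ (⊤ : ℕ∞) g) (h0 : ∀ z, g (0, z) = 0) (p : ℝ × ℝ) :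
    p.1 * kdiv g p = g p := by
  obtain ⟨x, z⟩ := p
  have hder : ∀ t ∈ uIcc (0:ℝ) 1,
      HasDerivAt (fun s => g (s * x, z))
        (x * (fderiv ℝ g (t * x, z)) ((1:ℝ), (0:ℝ))) t := by
    intro t _
    have hc : HasDerivAt (fun s : ℝ => (s * x, z)) ((x:ℝ), (0:ℝ)) t :=
      (hasDerivAt_mul_const x).prodMk (hasDerivAt_const t z)
    have := ((hg.differentiable (by simp) (t * x, z)).hasFDerivAt).comp_hasDerivAt t hc
    have hsmul : ((x:ℝ), (0:ℝ)) = x • ((1:ℝ), (0:ℝ)) := by simp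
    rw [hsmul, (fderiv ℝ g (t * x, z)).map_smul] at this
    simpa [Function.comp_def] using this
  have hint : IntervalIntegrable
      (fun t => x * (fderiv ℝ g (t * x, z)) ((1:ℝ), (0:ℝ))) volume 0 1 :=
    (continuous_const.mul (integrand_cont hg x z)).intervalIntegrable 0 1
  have := intervalIntegral.integral_eq_sub_of_hasDerivAt hder hint
  rw [intervalIntegral.integral_const_mul] at this
  simpa [kdiv, h0 z] using this

lemma param_contDiff (n : ℕ) : ∀ {E : Type} [NormedAddCommGroup E] [NormedSpace ℝ E]
    [CompleteSpace E] (F : (ℝ × ℝ) × ℝ → E), ContDiff ℝ n F →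
    ContDiff ℝ n (fun x => ∫ t in (0:ℝ)..1, F (x, t)) := by
  induction n with
  | zero =>
    intro E _ _ _ F hF
    rw [Nat.cast_zero, contDiff_zero] at hF ⊢
    exact intervalIntegral.continuous_parametric_intervalIntegral_of_continuous'
      (f := fun x t => F (x, t)) hF 0 1
  | succ n ih =>
    intro E _ _ _ F hF
    set G : (ℝ × ℝ) × ℝ → (ℝ × ℝ) →L[ℝ] E :=
      fun q => (fderiv ℝ F q).comp (ContinuousLinearMap.inl ℝ (ℝ × ℝ) ℝ) with hG
    have hF1 : ContDiff ℝ ((n : WithTop ℕ∞) + 1) F := by exact_mod_cast hF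
    have hFd : ContDiff ℝ n (fderiv ℝ F) := (contDiff_succ_iff_fderiv.mp hF1).2.2
    have hdiffF : Differentiable ℝ F := (contDiff_succ_iff_fderiv.mp hF1).1
    have hGc : ContDiff ℝ n G := hFd.clm_comp contDiff_const
    have hGcont : Continuous G := hGc.continuous
    have hFcont : Continuous F := hdiffF.continuous
    have hder : ∀ x₀ : ℝ × ℝ, HasFDerivAt (fun x => ∫ t in (0:ℝ)..1, F (x, t))
        (∫ t in (0:ℝ)..1, G (x₀, t)) x₀ := by
      intro x₀
      obtain ⟨C, hC⟩ := ((isCompact_closedBall x₀ 1).prod (isCompact_Icc (a := (0:ℝ)) (b := 1))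
        ).exists_bound_of_continuousOn hGcont.continuousOn
      refine intervalIntegral.hasFDerivAt_integral_of_dominated_of_fderiv_le
        (𝕜 := ℝ) (μ := volume) (F := fun x t => F (x, t)) (F' := fun x t => G (x, t)) (x₀ := x₀)
        (s := Metric.closedBall x₀ 1) (bound := fun _ => C)
        (Metric.closedBall_mem_nhds x₀ one_pos) ?_ ?_ ?_ ?_ ?_ ?_
      · exact Eventually.of_forall fun x =>
          (hFcont.comp (continuous_const.prodMk continuous_id)).aestronglyMeasurable
      · exact (hFcont.comp (continuous_const.prodMk continuous_id)).intervalIntegrable _ _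
      · exact (hGcont.comp (continuous_const.prodMk continuous_id)).aestronglyMeasurable
      · refine Eventually.of_forall fun t ht x hx => hC (x, t) ⟨hx, ?_⟩
        rw [uIoc_of_le zero_le_one] at ht
        exact ⟨ht.1.le, ht.2⟩
      · exact intervalIntegrable_const
      · refine Eventually.of_forall fun t _ x _ => ?_
        exact (hdiffF (x, t)).hasFDerivAt.comp x (hasFDerivAt_prodMk_left x t)
    have hfd : fderiv ℝ (fun x => ∫ t in (0:ℝ)..1, F (x, t))
        = fun x => ∫ t in (0:ℝ)..1, G (x, t) := funext fun x => (hder x).fderiv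
    have : ContDiff ℝ ((n : WithTop ℕ∞) + 1) (fun x => ∫ t in (0:ℝ)..1, F (x, t)) :=
      contDiff_succ_iff_fderiv.mpr ⟨fun x => (hder x).differentiableAt,
        fun h => absurd h (by simp), hfd ▸ ih G hGc⟩
    exact_mod_cast this

lemma kdiv_contDiff (hg : ContDiff ℝ (⊤ : ℕ∞) g) (h0 : ∀ z, g (0, z) = 0) :
    ContDiff ℝ (⊤ : ℕ∞) (kdiv g) := by
  have hD : ContDiff ℝ (⊤ : ℕ∞) (fderiv ℝ g) := hg.fderiv_right (m := (⊤ : ℕ∞)) (by simp)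
  have hm : ContDiff ℝ (⊤ : ℕ∞) (fun q : (ℝ × ℝ) × ℝ => (q.2 * q.1.1, q.1.2)) :=
    (contDiff_snd.mul (contDiff_fst.comp contDiff_fst)).prodMk (contDiff_snd.comp contDiff_fst)
  have hF : ContDiff ℝ (⊤ : ℕ∞)
      (fun q : (ℝ × ℝ) × ℝ => (fderiv ℝ g (q.2 * q.1.1, q.1.2)) ((1:ℝ), (0:ℝ))) :=
    (hD.comp hm).clm_apply contDiff_const
  refine contDiff_infty.mpr fun n => ?_
  exact param_contDiff n _ (contDiff_infty.mp hF n)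

end TCaux

open TCaux

/-- With `α = 1`, the TC-transformed unknowns `Ũ_r = r^{−1}(e_r + e_φ + r ∂_r e_φ)`
and `Ũ_z = r^{−1}(e_z + r ∂_z e_φ)` extend to smooth functions up to the axis. -/
theorem TC_alpha_one_smooth_extension
    (er eφ ez : ℝ × ℝ → ℝ)
    (her : ContDiff ℝ (⊤ : ℕ∞) er) (heφ : ContDiff ℝ (⊤ : ℕ∞) eφ) (hez : ContDiff ℝ (⊤ : ℕ∞) ez)
    (haxis_z : ∀ z : ℝ, ez (0, z) = 0)
    (haxis_r : ∀ z : ℝ, er (0, z) + eφ (0, z) = 0) :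
    ∃ Ur Uz : ℝ × ℝ → ℝ, ContDiff ℝ (⊤ : ℕ∞) Ur ∧ ContDiff ℝ (⊤ : ℕ∞) Uz ∧
      ∀ r : ℝ, 0 < r → ∀ z : ℝ,
        Ur (r, z) = r⁻¹ * (er (r, z) + eφ (r, z) + r * deriv (fun r' => eφ (r', z)) r) ∧
        Uz (r, z) = r⁻¹ * (ez (r, z) + r * deriv (fun z' => eφ (r, z')) z) := by
  have hg1 : ContDiff ℝ (⊤ : ℕ∞) (fun p : ℝ × ℝ => er p + eφ p) := her.add heφ
  have hg10 : ∀ z : ℝ, (fun p : ℝ × ℝ => er p + eφ p) (0, z) = 0 := fun z => haxis_r z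
  have hk1 : ContDiff ℝ (⊤ : ℕ∞) (kdiv (fun p : ℝ × ℝ => er p + eφ p)) := kdiv_contDiff hg1 hg10
  have hk1s := kdiv_spec hg1 hg10
  have hk2 : ContDiff ℝ (⊤ : ℕ∞) (kdiv ez) := kdiv_contDiff hez haxis_z
  have hk2s := kdiv_spec hez haxis_z
  have hD : ContDiff ℝ (⊤ : ℕ∞) (fderiv ℝ eφ) := heφ.fderiv_right (m := (⊤ : ℕ∞)) (by simp)
  have hDr : ContDiff ℝ (⊤ : ℕ∞) (fun p : ℝ × ℝ => (fderiv ℝ eφ p) ((1:ℝ), (0:ℝ))) :=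
    hD.clm_apply contDiff_const
  have hDz : ContDiff ℝ (⊤ : ℕ∞) (fun p : ℝ × ℝ => (fderiv ℝ eφ p) ((0:ℝ), (1:ℝ))) :=
    hD.clm_apply contDiff_const
  refine ⟨fun p => kdiv (fun p : ℝ × ℝ => er p + eφ p) p + (fderiv ℝ eφ p) ((1:ℝ), (0:ℝ)),
    fun p => kdiv ez p + (fderiv ℝ eφ p) ((0:ℝ), (1:ℝ)),
    hk1.add hDr, hk2.add hDz, ?_⟩
  intro r hr z
  have hrne : r ≠ 0 := ne_of_gt hr
  have hdr : deriv (fun r' => eφ (r', z)) r = (fderiv ℝ eφ (r, z)) ((1:ℝ), (0:ℝ)) := by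
    have hc : HasDerivAt (fun r' : ℝ => ((r' : ℝ), z)) (((1:ℝ), (0:ℝ))) r :=
      (hasDerivAt_id r).prodMk (hasDerivAt_const r z)
    have := ((heφ.differentiable (by simp) (r, z)).hasFDerivAt).comp_hasDerivAt r hc
    exact this.deriv
  have hdz : deriv (fun z' => eφ (r, z')) z = (fderiv ℝ eφ (r, z)) ((0:ℝ), (1:ℝ)) := by
    have hc : HasDerivAt (fun z' : ℝ => ((r : ℝ), z')) (((0:ℝ), (1:ℝ))) z :=
      (hasDerivAt_const z r).prodMk (hasDerivAt_id z)
    have := ((heφ.differentiable (by simp) (r, z)).hasFDerivAt).comp_hasDerivAt z hc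
    exact this.deriv
  constructor
  · rw [hdr]
    have h1 : r * kdiv (fun p : ℝ × ℝ => er p + eφ p) (r, z) = er (r, z) + eφ (r, z) := by
      simpa using hk1s (r, z)
    field_simp
    linarith [h1]
  · rw [hdz]
    have h2 : r * kdiv ez (r, z) = ez (r, z) := by simpa using hk2s (r, z)
    field_simp
    linarith [h2]
end

section
/- Let n be a nonzero integer and let e_r, e_φ : ℝ² → ℝ be smooth with e_r(0,z) + e_φ(0,z)·sign(n) = 0 when |n| = 1, and e_r(0,z) = e_φ(0,z) = 0 when |n| > 1. Then for |n| = 1, the functions (r,z) ↦ (n/r)·e_r(r,z) + e_φ(r,z)/r and (r,z) ↦ (n/r)·e_z(r,z) (with e_z(0,z) = 0) extend continuously to r = 0. -/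
open Real intervalIntegral

lemma hadamard_div (φ : ℝ × ℝ → ℝ) (hφ : ContDiff ℝ (⊤ : ℕ∞) φ) (h0 : ∀ z, φ (0, z) = 0) :
    ∃ G : ℝ × ℝ → ℝ, Continuous G ∧ ∀ r : ℝ, r ≠ 0 → ∀ z, G (r, z) = φ (r, z) / r := by
  set D : ℝ × ℝ → ℝ := fun p => fderiv ℝ φ p (1, 0) with hD
  have hDc : Continuous D := (hφ.continuous_fderiv (by simp)).clm_apply continuous_const
  refine ⟨fun p => ∫ t in (0:ℝ)..1, D (t * p.1, p.2), ?_, ?_⟩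
  · exact continuous_parametric_intervalIntegral_of_continuous'
      (f := fun (p : ℝ × ℝ) (t : ℝ) => D (t * p.1, p.2))
      (by exact hDc.comp (by fun_prop)) 0 1
  · intro r hr z
    have hderiv : ∀ s : ℝ, HasDerivAt (fun s => φ (s, z)) (D (s, z)) s := by
      intro s
      have h1 : HasDerivAt (fun s : ℝ => (s, z)) ((1:ℝ), (0:ℝ)) s :=
        (hasDerivAt_id s).prodMk (hasDerivAt_const s z)
      exact ((hφ.differentiable (by simp) (s, z)).hasFDerivAt).comp_hasDerivAt s h1
    have hint : ∀ a b : ℝ, IntervalIntegrable (fun s => D (s, z)) MeasureTheory.volume a b :=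
      fun a b => (hDc.comp (by fun_prop)).intervalIntegrable a b
    have hftc : ∫ s in (0:ℝ)..r, D (s, z) = φ (r, z) := by
      rw [integral_eq_sub_of_hasDerivAt (fun s _ => hderiv s) (hint 0 r), h0 z, sub_zero]
    have hsub : (∫ t in (0:ℝ)..1, D (t * r, z)) = r⁻¹ • ∫ s in (0:ℝ)..r, D (s, z) := by
      rw [integral_comp_mul_right (fun t => D (t, z)) hr]
      norm_num
    simp only [hsub, hftc, smul_eq_mul, div_eq_inv_mul]

/-- Transformation TB: under the axis conditions, the transformed unknowns
`(n/r) e_r + e_φ/r` and `(n/r) e_z` extend continuously to the axis `r = 0`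
for `|n| = 1`. -/
theorem TB_transform_continuous_extension (n : ℤ) (hn : n ≠ 0)
    (er eφ ez : ℝ × ℝ → ℝ)
    (her : ContDiff ℝ (⊤ : ℕ∞) er) (heφ : ContDiff ℝ (⊤ : ℕ∞) eφ) (hez : ContDiff ℝ (⊤ : ℕ∞) ez)
    (haxis1 : |n| = 1 → ∀ z : ℝ, er (0, z) + eφ (0, z) * (Int.sign n : ℝ) = 0)
    (haxis2 : 1 < |n| → ∀ z : ℝ, er (0, z) = 0 ∧ eφ (0, z) = 0)
    (haxisz : ∀ z : ℝ, ez (0, z) = 0) :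
    |n| = 1 →
      ∃ U W : ℝ × ℝ → ℝ, Continuous U ∧ Continuous W ∧
        ∀ r : ℝ, 0 < r → ∀ z : ℝ,
          U (r, z) = (n : ℝ) / r * er (r, z) + eφ (r, z) / r ∧
          W (r, z) = (n : ℝ) / r * ez (r, z) := by
  intro habs
  have hsign : Int.sign n = n := by
    rcases (abs_eq (by norm_num : (0:ℤ) ≤ 1)).mp habs with h | h <;> simp [h]
  set f : ℝ × ℝ → ℝ := fun p => (n : ℝ) * er p + eφ p with hf
  have hfc : ContDiff ℝ (⊤ : ℕ∞) f := (contDiff_const.mul her).add heφ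
  have hf0 : ∀ z, f (0, z) = 0 := by
    intro z
    have h1 := haxis1 habs z
    rw [hsign] at h1
    have hn2 : (n : ℝ) * (n : ℝ) = 1 := by
      rcases (abs_eq (by norm_num : (0:ℤ) ≤ 1)).mp habs with h | h <;> simp [h]
    have : (n : ℝ) * (er (0, z) + eφ (0, z) * (n : ℝ)) = 0 := by rw [h1]; ring
    simp only [hf]
    linear_combination this - eφ (0, z) * hn2
  obtain ⟨U, hUc, hU⟩ := hadamard_div f hfc hf0
  obtain ⟨G, hGc, hG⟩ := hadamard_div ez hez haxisz
  refine ⟨U, fun p => (n : ℝ) * G p, hUc, continuous_const.mul hGc, ?_⟩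
  intro r hr z
  constructor
  · rw [hU r hr.ne' z]; simp only [hf]; ring
  · simp only []; rw [hG r hr.ne' z]; ring
end

section
/- Let f : [0, 1] → ℝ, f(r) = r^{1/2}. For the best L²([0,1])-approximation error by polynomials of degree ≤ p, there exists c > 0 such that the error is at least c·p^{−2} for all p ≥ 1; in particular the error does not decay faster than algebraically of fixed order, regardless of p. -/
/-!
The shifted Legendre polynomials `ψₙ` are orthogonal on `[0, 1]` with `∫ ψₙ² = 1 / (2n + 1)`.
Rodrigues' formula `n! ψₙ = Dⁿ (xⁿ (1 - x)ⁿ)`, `n`-fold integration by parts and the Beta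
integral give, for natural `s`, the moment identity
`(∫ xˢ ψₙ) (s + 1) ⋯ (s + n + 1) = (-1)ⁿ s (s - 1) ⋯ (s - n + 1)`. Since
`∫ xˢ ψₙ = ∑ₖ aₖ / (s + k + 1)`, the left side is a polynomial in `s` as well, so the identity holds
for every real `s > -1`. At `s = 1/2` it yields `∫ √x ψₙ = -2 / ((2n - 1)(2n + 1)(2n + 3))`, of
size `n⁻³`. For `deg P ≤ p` the error `√x - P` has the same coefficients against `ψₙ` when `n > p`,
so Bessel's inequality over `p < n ≤ 2p` bounds `‖√x - P‖²` below by `p` terms of size `p⁻⁵`.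
-/

open Real MeasureTheory intervalIntegral
open Polynomial Nat
open scoped ENNReal

theorem neg_one_pow_sq {R : Type*} [Monoid R] [HasDistribNeg R] (n : ℕ) :
    ((-1 : R) ^ n) ^ 2 = 1 := by
  rw [← pow_mul, pow_mul', neg_one_sq, one_pow]

theorem two_mul_natCast_sub_one_ne_zero (n : ℕ) : (2 * n - 1 : ℝ) ≠ 0 :=
  sub_ne_zero.mpr (by exact_mod_cast (by omega : 2 * n ≠ 1))

theorem integral_pow_mul_one_sub_pow_mul_ascPochhammer (m n : ℕ) :
    (∫ x in (0:ℝ)..1, x ^ m * (1 - x) ^ n) * (ascPochhammer ℝ (n + 1)).eval ((m : ℝ) + 1)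
      = n ! := by
  induction n generalizing m with
  | zero =>
    simp only [pow_zero, mul_one, integral_pow, zero_add, ascPochhammer_one, eval_X]
    field_simp
    simp
  | succ n ih =>
    have hu : ∀ x ∈ Set.uIcc (0:ℝ) 1,
        HasDerivAt (fun x : ℝ => (1 - x) ^ (n + 1)) (-((n + 1) * (1 - x) ^ n)) x := fun x _ => by
      simpa using ((hasDerivAt_id x).const_sub 1).fun_pow (n + 1)
    have hv : ∀ x ∈ Set.uIcc (0:ℝ) 1,
        HasDerivAt (fun x : ℝ => x ^ (m + 1)) ((m + 1) * x ^ m) x := fun x _ => by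
      simpa using hasDerivAt_pow (m + 1) x
    have ibp := integral_mul_deriv_eq_deriv_mul hu hv
      (Continuous.intervalIntegrable (by fun_prop) _ _)
      (Continuous.intervalIntegrable (by fun_prop) _ _)
    norm_num [intervalIntegral.integral_neg] at ibp
    have hstep : ((m : ℝ) + 1) * ∫ x in (0:ℝ)..1, x ^ m * (1 - x) ^ (n + 1)
        = (n + 1) * ∫ x in (0:ℝ)..1, x ^ (m + 1) * (1 - x) ^ n := by
      simp only [← intervalIntegral.integral_const_mul] at ibp ⊢
      exact (integral_congr fun x _ => by ring).trans
        (ibp.trans (integral_congr fun x _ => by ring))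
    have := ih (m + 1)
    rw [ascPochhammer_succ_left, eval_mul, eval_X, eval_comp, eval_add, eval_X, eval_one,
      mul_left_comm, ← mul_assoc, hstep, mul_assoc]
    push_cast at this ⊢
    rw [this, factorial_succ]
    push_cast
    ring

theorem integral_rpow_mul_eval {s : ℝ} (hs : -1 < s) (Q : ℝ[X]) :
    ∫ x in (0:ℝ)..1, x ^ s * Q.eval x
      = ∑ k ∈ Finset.range (Q.natDegree + 1), Q.coeff k / (s + k + 1) := by
  have hk (k : ℕ) : -1 < s + k := by linarith [k.cast_nonneg (α := ℝ)]
  calc ∫ x in (0:ℝ)..1, x ^ s * Q.eval x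
      = ∫ x in (0:ℝ)..1, ∑ k ∈ Finset.range (Q.natDegree + 1), Q.coeff k * x ^ (s + k) := by
        refine integral_congr_ae (Filter.Eventually.of_forall fun x hx => ?_)
        rw [Set.uIoc_of_le zero_le_one] at hx
        simp only [eval_eq_sum_range, Finset.mul_sum, rpow_add hx.1, rpow_natCast]
        exact Finset.sum_congr rfl fun k _ => by ring
    _ = _ := by
        rw [intervalIntegral.integral_finsetSum fun k _ =>
          (intervalIntegrable_rpow' (hk k)).const_mul _]
        refine Finset.sum_congr rfl fun k _ => ?_
        rw [intervalIntegral.integral_const_mul, integral_rpow (.inl (hk k))]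
        simp [(show s + k + 1 ≠ 0 by linarith [hk k]), div_eq_mul_inv]

/-- Each `s + k + 1` with `k ≤ deg Q` is a factor of `(s + 1) (s + 2) ⋯ (s + deg Q + 1)`. -/
theorem exists_eval_eq_integral_rpow_mul_eval_mul_ascPochhammer (Q : ℝ[X]) :
    ∃ R : ℝ[X], ∀ s : ℝ, -1 < s →
      (∫ x in (0:ℝ)..1, x ^ s * Q.eval x) * (ascPochhammer ℝ (Q.natDegree + 1)).eval (s + 1)
        = R.eval s := by
  set A := (ascPochhammer ℝ (Q.natDegree + 1)).comp (X + 1)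
  have hroot : ∀ k ∈ Finset.range (Q.natDegree + 1), A.IsRoot (-(k + 1)) := fun k hk => by
    simpa [A] using ascPochhammer_eval_neg_coe_nat_of_lt (R := ℝ) (Finset.mem_range.mp hk)
  refine ⟨∑ k ∈ Finset.range (Q.natDegree + 1), C (Q.coeff k) * (A /ₘ (X - C (-((k : ℝ) + 1)))),
    fun s hs => ?_⟩
  rw [integral_rpow_mul_eval hs, Finset.sum_mul, eval_finsetSum]
  refine Finset.sum_congr rfl fun k hk => ?_
  have hA := congr_arg (eval s) (mul_divByMonic_eq_iff_isRoot.mpr (hroot k hk))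
  have hsk : s + k + 1 ≠ 0 := by linarith [k.cast_nonneg (α := ℝ)]
  simp only [A, eval_mul, eval_comp, eval_sub, eval_add, eval_X, eval_C, eval_one] at hA ⊢
  rw [← hA]
  field_simp
  ring

theorem eval_iterate_derivative_X_pow_mul_one_sub_X_pow_eq_zero {n k : ℕ} (hk : k < n) :
    (derivative^[k] (X ^ n * (1 - X) ^ n : ℝ[X])).eval 0 = 0
      ∧ (derivative^[k] (X ^ n * (1 - X) ^ n : ℝ[X])).eval 1 = 0 := by
  obtain ⟨c, hc⟩ := pow_sub_dvd_iterate_derivative_pow (X * (1 - X) : ℝ[X]) n k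
  simp [← mul_pow, hc, zero_pow (Nat.sub_ne_zero_of_lt hk)]

theorem integral_eval_mul_eval_iterate_derivative {n : ℕ} {G : ℝ[X]}
    (hG : ∀ k < n, (derivative^[k] G).eval 0 = 0 ∧ (derivative^[k] G).eval 1 = 0) (P : ℝ[X]) :
    ∫ x in (0:ℝ)..1, P.eval x * (derivative^[n] G).eval x
      = (-1) ^ n * ∫ x in (0:ℝ)..1, (derivative^[n] P).eval x * G.eval x := by
  induction n generalizing P with
  | zero => simp
  | succ n ih =>
    have ibp := integral_mul_deriv_eq_deriv_mul (a := 0) (b := 1) (fun x _ => P.hasDerivAt x)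
      (fun x _ => (derivative^[n] G).hasDerivAt x)
      (P.derivative.continuous.intervalIntegrable _ _)
      ((derivative^[n] G).derivative.continuous.intervalIntegrable _ _)
    obtain ⟨h0, h1⟩ := hG n n.lt_succ_self
    rw [Function.iterate_succ_apply', ibp, h0, h1, ih (fun k hk => hG k (by omega)),
      Function.iterate_succ_apply]
    ring

noncomputable def shiftedLegendreReal (n : ℕ) : ℝ[X] :=
  (shiftedLegendre n).map (Int.castRingHom ℝ)

theorem degree_shiftedLegendreReal (n : ℕ) : (shiftedLegendreReal n).degree = n := by
  rw [shiftedLegendreReal, degree_map_eq_of_injective (RingHom.injective_int _),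
    degree_shiftedLegendre]

theorem natDegree_shiftedLegendreReal (n : ℕ) : (shiftedLegendreReal n).natDegree = n :=
  natDegree_eq_of_degree_eq_some (degree_shiftedLegendreReal n)

theorem factorial_mul_shiftedLegendreReal (n : ℕ) :
    (n ! : ℝ[X]) * shiftedLegendreReal n = derivative^[n] (X ^ n * (1 - X) ^ n) := by
  simpa [shiftedLegendreReal, ← iterate_derivative_map] using
    congr_arg (Polynomial.map (Int.castRingHom ℝ)) (factorial_mul_shiftedLegendre_eq n)

theorem factorial_mul_integral_mul_shiftedLegendreReal (n : ℕ) (Q : ℝ[X]) :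
    n ! * ∫ x in (0:ℝ)..1, Q.eval x * (shiftedLegendreReal n).eval x
      = (-1) ^ n * ∫ x in (0:ℝ)..1, (derivative^[n] Q).eval x * (x ^ n * (1 - x) ^ n) := by
  have h := integral_eval_mul_eval_iterate_derivative (n := n)
    (fun _ hk => eval_iterate_derivative_X_pow_mul_one_sub_X_pow_eq_zero hk) Q
  rw [← factorial_mul_shiftedLegendreReal] at h
  simpa only [eval_mul, eval_natCast, eval_pow, eval_sub, eval_one, eval_X,
    mul_left_comm _ (n ! : ℝ), intervalIntegral.integral_const_mul] using h

theorem integral_mul_shiftedLegendreReal_eq_zero {n : ℕ} {Q : ℝ[X]} (hQ : Q.degree < n) :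
    ∫ x in (0:ℝ)..1, Q.eval x * (shiftedLegendreReal n).eval x = 0 := by
  have h := factorial_mul_integral_mul_shiftedLegendreReal n Q
  rw [iterate_derivative_eq_zero_of_degree_lt hQ] at h
  simpa [factorial_ne_zero] using h

theorem integral_shiftedLegendreReal_mul_of_ne {m n : ℕ} (hmn : m ≠ n) :
    ∫ x in (0:ℝ)..1, (shiftedLegendreReal m).eval x * (shiftedLegendreReal n).eval x = 0 := by
  rcases hmn.lt_or_gt with h | h
  · exact integral_mul_shiftedLegendreReal_eq_zero
      (by rw [degree_shiftedLegendreReal]; exact_mod_cast h)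
  · simp_rw [mul_comm ((shiftedLegendreReal m).eval _)]
    exact integral_mul_shiftedLegendreReal_eq_zero
      (by rw [degree_shiftedLegendreReal]; exact_mod_cast h)

theorem integral_mul_shiftedLegendreReal_of_degree_le {n : ℕ} {Q : ℝ[X]} (hQ : Q.degree ≤ n) :
    ∫ x in (0:ℝ)..1, Q.eval x * (shiftedLegendreReal n).eval x
      = Q.coeff n * ∫ x in (0:ℝ)..1, x ^ n * (shiftedLegendreReal n).eval x := by
  have hlow : (Q - C (Q.coeff n) * X ^ n).degree < (n : WithBot ℕ) := by
    rw [degree_lt_iff_coeff_zero]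
    intro m hm
    rcases hm.lt_or_eq with hm | rfl
    · simp [hm.ne', coeff_eq_zero_of_degree_lt (hQ.trans_lt (by exact_mod_cast hm))]
    · simp
  calc ∫ x in (0:ℝ)..1, Q.eval x * (shiftedLegendreReal n).eval x
      = ∫ x in (0:ℝ)..1, ((Q - C (Q.coeff n) * X ^ n).eval x * (shiftedLegendreReal n).eval x
          + Q.coeff n * (x ^ n * (shiftedLegendreReal n).eval x)) :=
        integral_congr fun x _ => by simp only [eval_sub, eval_mul, eval_C, eval_pow, eval_X]; ring
    _ = _ := by
        rw [intervalIntegral.integral_add (Continuous.intervalIntegrable (by fun_prop) _ _)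
          (Continuous.intervalIntegrable (by fun_prop) _ _),
          integral_mul_shiftedLegendreReal_eq_zero hlow, intervalIntegral.integral_const_mul,
          zero_add]

theorem integral_pow_mul_shiftedLegendreReal_mul_ascPochhammer (m n : ℕ) :
    (∫ x in (0:ℝ)..1, x ^ m * (shiftedLegendreReal n).eval x)
        * (ascPochhammer ℝ (n + 1)).eval ((m : ℝ) + 1)
      = (-1) ^ n * (descPochhammer ℝ n).eval (m : ℝ) := by
  have h := factorial_mul_integral_mul_shiftedLegendreReal n (X ^ m)
  have hderiv : ∫ x in (0:ℝ)..1, (derivative^[n] (X ^ m : ℝ[X])).eval x * (x ^ n * (1 - x) ^ n)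
      = m.descFactorial n * ∫ x in (0:ℝ)..1, x ^ m * (1 - x) ^ n := by
    rw [iterate_derivative_X_pow_eq_C_mul, ← intervalIntegral.integral_const_mul]
    refine integral_congr fun x _ => ?_
    rcases le_or_gt n m with hnm | hmn
    · simp only [eval_mul, eval_C, eval_pow, eval_X]
      rw [← mul_assoc, mul_assoc _ (x ^ (m - n)), ← pow_add, Nat.sub_add_cancel hnm]
      ring
    · simp [Nat.descFactorial_eq_zero_iff_lt.mpr hmn]
  rw [hderiv] at h
  simp only [eval_pow, eval_X] at h
  rw [descPochhammer_eval_eq_descFactorial]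
  apply mul_left_cancel₀ (show (n ! : ℝ) ≠ 0 by positivity)
  calc (n ! : ℝ) * ((∫ x in (0:ℝ)..1, x ^ m * (shiftedLegendreReal n).eval x)
        * (ascPochhammer ℝ (n + 1)).eval ((m : ℝ) + 1))
      = (-1) ^ n * m.descFactorial n * ((∫ x in (0:ℝ)..1, x ^ m * (1 - x) ^ n)
        * (ascPochhammer ℝ (n + 1)).eval ((m : ℝ) + 1)) := by rw [← mul_assoc, h]; ring
    _ = _ := by rw [integral_pow_mul_one_sub_pow_mul_ascPochhammer]; ring

theorem integral_rpow_mul_shiftedLegendreReal_mul_ascPochhammer (n : ℕ) {s : ℝ} (hs : -1 < s) :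
    (∫ x in (0:ℝ)..1, x ^ s * (shiftedLegendreReal n).eval x)
        * (ascPochhammer ℝ (n + 1)).eval (s + 1)
      = (-1) ^ n * (descPochhammer ℝ n).eval s := by
  obtain ⟨R, hR⟩ := exists_eval_eq_integral_rpow_mul_eval_mul_ascPochhammer (shiftedLegendreReal n)
  rw [natDegree_shiftedLegendreReal] at hR
  have hRnat : R = C ((-1) ^ n) * descPochhammer ℝ n := by
    refine eq_of_infinite_eval_eq _ _
      ((Set.infinite_range_of_injective Nat.cast_injective).mono ?_)
    rintro _ ⟨m, rfl⟩
    have hm := hR m (by linarith [m.cast_nonneg (α := ℝ)])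
    simp only [rpow_natCast] at hm
    simp [← hm, integral_pow_mul_shiftedLegendreReal_mul_ascPochhammer]
  rw [hR s hs, hRnat, eval_mul, eval_C]

theorem integral_shiftedLegendreReal_mul_self (n : ℕ) :
    ∫ x in (0:ℝ)..1, (shiftedLegendreReal n).eval x * (shiftedLegendreReal n).eval x
      = 1 / (2 * n + 1) := by
  rw [integral_mul_shiftedLegendreReal_of_degree_le (degree_shiftedLegendreReal n).le]
  have hmoment := integral_pow_mul_shiftedLegendreReal_mul_ascPochhammer n n
  rw [descPochhammer_eval_eq_descFactorial, Nat.descFactorial_self] at hmoment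
  have hasc : (n ! : ℝ) * (ascPochhammer ℝ (n + 1)).eval ((n : ℝ) + 1)
      = (2 * n + 1) * (2 * n)! := by
    rw [factorial_mul_ascPochhammer, show n + (n + 1) = 2 * n + 1 by ring, factorial_succ]
    push_cast
    ring
  have hchoose : ((2 * n).choose n : ℝ) * n ! * n ! = (2 * n)! := by
    exact_mod_cast two_mul n ▸ Nat.add_choose_mul_factorial_mul_factorial n n
  have hlead : (shiftedLegendreReal n).coeff n = (-1) ^ n * ((2 * n).choose n : ℝ) := by
    simp [shiftedLegendreReal, coeff_map, coeff_shiftedLegendre, two_mul]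
  rw [hlead, eq_div_iff (by positivity)]
  apply mul_right_cancel₀ (show ((2 * n)! : ℝ) ≠ 0 by positivity)
  linear_combination (-(-1) ^ n * ((2 * n).choose n : ℝ)
      * ∫ x in (0:ℝ)..1, x ^ n * (shiftedLegendreReal n).eval x) * hasc
    + ((-1) ^ n * ((2 * n).choose n : ℝ) * n !) * hmoment + hchoose
    + ((2 * n).choose n * n ! * n ! : ℝ) * neg_one_pow_sq (R := ℝ) n

theorem descPochhammer_eval_half_mul (n : ℕ) :
    (descPochhammer ℝ n).eval (1 / 2) * ((2 * n - 1) * (2 * n + 1) * (2 * n + 3))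
      = -2 * (-1) ^ n * (ascPochhammer ℝ (n + 1)).eval (3 / 2) := by
  induction n with
  | zero => norm_num
  | succ n ih =>
    rw [descPochhammer_succ_eval, ascPochhammer_succ_eval]
    push_cast
    linear_combination (-(2 * n + 5) / 2 : ℝ) * ih

theorem integral_sqrt_mul_shiftedLegendreReal (n : ℕ) :
    ∫ x in (0:ℝ)..1, √x * (shiftedLegendreReal n).eval x
      = -2 / ((2 * n - 1) * (2 * n + 1) * (2 * n + 3)) := by
  have hmoment := integral_rpow_mul_shiftedLegendreReal_mul_ascPochhammer n
    (s := 1 / 2) (by norm_num)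
  simp only [← sqrt_eq_rpow] at hmoment
  norm_num at hmoment
  have hodd := two_mul_natCast_sub_one_ne_zero n
  rw [eq_div_iff (by positivity)]
  apply mul_right_cancel₀ (ascPochhammer_pos (n + 1) (3 / 2 : ℝ) (by norm_num)).ne'
  linear_combination ((2 * n - 1) * (2 * n + 1) * (2 * n + 3) : ℝ) * hmoment
    + (-1) ^ n * descPochhammer_eval_half_mul n
    - 2 * (ascPochhammer ℝ (n + 1)).eval (3 / 2) * neg_one_pow_sq (R := ℝ) n

theorem Continuous.memLp_restrict_Ioc {E : Type*} [NormedAddCommGroup E] {f : ℝ → E}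
    (hf : Continuous f) (p : ℝ≥0∞) (a b : ℝ) : MemLp f p (volume.restrict (Set.Ioc a b)) := by
  obtain ⟨C, hC⟩ :=
    (isCompact_Icc (a := a) (b := b)).exists_bound_of_continuousOn hf.continuousOn
  exact MemLp.of_bound hf.aestronglyMeasurable C
    (ae_restrict_of_forall_mem measurableSet_Ioc fun x hx => hC x (Set.Ioc_subset_Icc_self hx))

theorem inner_toLp_restrict_Ioc {a b : ℝ} (hab : a ≤ b) {f g : ℝ → ℝ}
    (hf : MemLp f 2 (volume.restrict (Set.Ioc a b)))
    (hg : MemLp g 2 (volume.restrict (Set.Ioc a b))) :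
    inner ℝ (hf.toLp f) (hg.toLp g) = ∫ x in a..b, f x * g x := by
  rw [L2.inner_def, integral_of_le hab]
  refine integral_congr_ae ?_
  filter_upwards [hf.coeFn_toLp, hg.coeFn_toLp] with x hfx hgx
  rw [hfx, hgx, Real.inner_apply]

noncomputable def shiftedLegendreL2 (n : ℕ) : Lp ℝ 2 (volume.restrict (Set.Ioc (0:ℝ) 1)) :=
  √(2 * n + 1) • ((shiftedLegendreReal n).continuous.memLp_restrict_Ioc 2 0 1).toLp _

theorem inner_shiftedLegendreL2 (n : ℕ) {f : ℝ → ℝ}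
    (hf : MemLp f 2 (volume.restrict (Set.Ioc (0:ℝ) 1))) :
    inner ℝ (shiftedLegendreL2 n) (hf.toLp f)
      = √(2 * n + 1) * ∫ x in (0:ℝ)..1, (shiftedLegendreReal n).eval x * f x := by
  rw [shiftedLegendreL2, real_inner_smul_left, inner_toLp_restrict_Ioc zero_le_one]

theorem orthonormal_shiftedLegendreL2 : Orthonormal ℝ shiftedLegendreL2 := by
  rw [orthonormal_iff_ite]
  intro m n
  simp only [shiftedLegendreL2, real_inner_smul_left, real_inner_smul_right,
    inner_toLp_restrict_Ioc zero_le_one]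
  split_ifs with h
  · subst h
    rw [integral_shiftedLegendreReal_mul_self, ← mul_assoc, mul_self_sqrt (by positivity)]
    field_simp
  · rw [integral_shiftedLegendreReal_mul_of_ne h, mul_zero, mul_zero]

theorem sum_mul_sq_integral_mul_shiftedLegendreReal_le {f : ℝ → ℝ} (hf : Continuous f)
    (S : Finset ℕ) :
    ∑ n ∈ S, (2 * n + 1) * (∫ x in (0:ℝ)..1, f x * (shiftedLegendreReal n).eval x) ^ 2
      ≤ ∫ x in (0:ℝ)..1, f x ^ 2 := by
  have hfL2 := hf.memLp_restrict_Ioc 2 0 1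
  have hbessel := orthonormal_shiftedLegendreL2.sum_inner_products_le (hfL2.toLp f) (s := S)
  rw [← real_inner_self_eq_norm_sq, inner_toLp_restrict_Ioc zero_le_one] at hbessel
  have hsqrt (n : ℕ) : √(2 * (n : ℝ) + 1) ^ 2 = 2 * n + 1 := sq_sqrt (by positivity)
  simp only [inner_shiftedLegendreL2, Real.norm_eq_abs, sq_abs, mul_pow, hsqrt] at hbessel
  simpa only [sq, mul_comm (f _)] using hbessel

theorem integral_sqrt_sub_eval_mul_shiftedLegendreReal {P : ℝ[X]} {n : ℕ} (hP : P.degree < n) :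
    ∫ x in (0:ℝ)..1, (√x - P.eval x) * (shiftedLegendreReal n).eval x
      = -2 / ((2 * n - 1) * (2 * n + 1) * (2 * n + 3)) := by
  conv_lhs => enter [1, x]; rw [sub_mul]
  rw [intervalIntegral.integral_sub (Continuous.intervalIntegrable (by fun_prop) _ _)
    (Continuous.intervalIntegrable (by fun_prop) _ _), integral_sqrt_mul_shiftedLegendreReal,
    integral_mul_shiftedLegendreReal_eq_zero hP, sub_zero]

theorem four_div_pow_five_le (n : ℕ) :
    4 / (2 * n + 3 : ℝ) ^ 5
      ≤ (2 * n + 1) * (-2 / ((2 * n - 1) * (2 * n + 1) * (2 * n + 3))) ^ 2 := by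
  have hodd := two_mul_natCast_sub_one_ne_zero n
  calc 4 / (2 * n + 3 : ℝ) ^ 5 ≤ 4 / ((2 * n - 1) ^ 2 * (2 * n + 1) * (2 * n + 3) ^ 2) := by
        apply div_le_div_of_nonneg_left (by norm_num) (by positivity)
        calc (2 * n - 1 : ℝ) ^ 2 * (2 * n + 1) * (2 * n + 3) ^ 2
            ≤ (2 * n + 3 : ℝ) ^ 2 * (2 * n + 3) * (2 * n + 3) ^ 2 := by
              gcongr ?_ * ?_ * _
              · nlinarith [n.cast_nonneg (α := ℝ)]
              · linarith
          _ = (2 * n + 3 : ℝ) ^ 5 := by ring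
    _ = _ := by field_simp; ring

theorem le_integral_sqrt_sub_eval_sq {p : ℕ} (hp : 1 ≤ p) {P : ℝ[X]} (hP : P.degree ≤ p) :
    4 / (7 ^ 5 * p ^ 4 : ℝ) ≤ ∫ x in (0:ℝ)..1, (√x - P.eval x) ^ 2 := by
  have hterm : ∀ n ∈ Finset.Icc (p + 1) (2 * p), 4 / (7 * p : ℝ) ^ 5 ≤
      (2 * n + 1) * (∫ x in (0:ℝ)..1, (√x - P.eval x) * (shiftedLegendreReal n).eval x) ^ 2 := by
    intro n hn
    obtain ⟨hpn, hnp⟩ := Finset.mem_Icc.mp hn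
    rw [integral_sqrt_sub_eval_mul_shiftedLegendreReal (hP.trans_lt (by exact_mod_cast hpn))]
    refine le_trans ?_ (four_div_pow_five_le n)
    gcongr
    have : (n : ℝ) ≤ 2 * p := by exact_mod_cast hnp
    have : (1 : ℝ) ≤ p := by exact_mod_cast hp
    linarith
  have hsum := Finset.card_nsmul_le_sum _ _ _ hterm
  rw [Nat.card_Icc, show 2 * p + 1 - (p + 1) = p by omega, nsmul_eq_mul] at hsum
  refine le_trans (le_of_eq ?_) (hsum.trans (sum_mul_sq_integral_mul_shiftedLegendreReal_le
    (continuous_sqrt.sub P.continuous) _))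
  have : (p : ℝ) ≠ 0 := by positivity
  field_simp

/-- The best `L²([0,1])` polynomial approximation error of `r ↦ √r` decays no
faster than `p⁻²`. -/
theorem sqrt_poly_approx_lower_bound :
    ∃ c : ℝ, 0 < c ∧ ∀ p : ℕ, 1 ≤ p → ∀ P : Polynomial ℝ, P.degree ≤ (p : ℕ) →
      c * ((p : ℝ) ^ (2:ℕ))⁻¹ ≤
        (∫ r in (0:ℝ)..1, (Real.sqrt r - P.eval r) ^ 2) ^ ((1:ℝ)/2) := by
  refine ⟨1 / 100, by norm_num, fun p hp P hP => ?_⟩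
  rw [← sqrt_eq_rpow]
  refine le_sqrt_of_sq_le (le_trans ?_ (le_integral_sqrt_sub_eval_sq hp hP))
  have : (p : ℝ) ≠ 0 := by positivity
  field_simp
  norm_num
end
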